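/- arXiv:2306.02730 — 3 statements merged into one kernel-verified Lean document; each statement's English description precedes it below -/
import Mathlib

section
/- Let v_i ≠ v_j be two tasks in a canonical task graph containing no buffer nodes, and suppose there is a node v' reachable from v_i by a directed path and reachable from v_j by a directed path. Assume every node v on these paths has a positive rational production rate R(v), positive data volumes with Cout(v) = R(v)·Cin(v), and positive real streaming intervals with SIout(v) = SIin(v)/R(v); that along each edge of the paths Cout of the source equals Cin of the target and SIin of the target equals SIout of the source; and that the common endpoint v' has a single well-defined input streaming interval SIin(v') equal to the streaming interval delivered along both paths. Then SIout(v_i) · Cout(v_i) = SIout(v_j) · Cout(v_j). -/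
/-! At every node the product of streaming interval and volume is the same on the input and the
output side, because the rate `R v` enters the two factors inversely. Along an edge both factors
are passed on unchanged, so `SIout · Cout` is constant along each path, and both paths end in `v'`. -/

theorem apply_eq_apply_zero_of_forall_succ_eq {β : Type*} {a : ℕ → β} {n : ℕ}
    (hstep : ∀ t < n, a (t + 1) = a t) : a n = a 0 := by
  induction n with
  | zero => rfl
  | succ n ih =>
    rw [hstep n n.lt_succ_self, ih fun t ht => hstep t (ht.trans n.lt_succ_self)]

theorem siOut_mul_cOut_eq_siIn_mul_cIn {r cIn cOut : ℚ} {siIn siOut : ℝ} (hr : r ≠ 0)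
    (hC : cOut = r * cIn) (hSI : siOut = siIn / r) : siOut * cOut = siIn * cIn := by
  have hr' : (r : ℝ) ≠ 0 := by exact_mod_cast hr
  rw [hSI, hC]
  push_cast
  field_simp

theorem siOut_mul_cOut_path_eq {α : Type*} (R Cin Cout : α → ℚ) (SIin SIout : α → ℝ)
    (n : ℕ) (h : ℕ → α)
    (hnode : ∀ t < n, R (h (t + 1)) ≠ 0 ∧ Cout (h (t + 1)) = R (h (t + 1)) * Cin (h (t + 1)) ∧
      SIout (h (t + 1)) = SIin (h (t + 1)) / (R (h (t + 1)) : ℝ))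
    (hedge : ∀ t < n, Cout (h t) = Cin (h (t + 1)) ∧ SIin (h (t + 1)) = SIout (h t)) :
    SIout (h n) * (Cout (h n) : ℝ) = SIout (h 0) * (Cout (h 0) : ℝ) := by
  refine apply_eq_apply_zero_of_forall_succ_eq (a := fun t => SIout (h t) * (Cout (h t) : ℝ))
    fun t ht => ?_
  obtain ⟨hR, hC, hSI⟩ := hnode t ht
  obtain ⟨hCe, hSIe⟩ := hedge t ht
  rw [siOut_mul_cOut_eq_siIn_mul_cIn hR hC hSI, hSIe, hCe]

theorem streaming_interval_volume_product_eq_general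
    {α : Type*} (vi vj v' : α)
    (m k : ℕ) (f g : ℕ → α)
    (hf0 : f 0 = vi) (hfm : f m = v')
    (hg0 : g 0 = vj) (hgk : g k = v')
    (R Cin Cout : α → ℚ) (SIin SIout : α → ℝ)
    (hnode : ∀ v : α, ((∃ t ≤ m, f t = v) ∨ (∃ t ≤ k, g t = v)) →
      0 < R v ∧ 0 < Cin v ∧ 0 < Cout v ∧ 0 < SIin v ∧ 0 < SIout v ∧
      Cout v = R v * Cin v ∧ SIout v = SIin v / (R v : ℝ))
    (hedgeF : ∀ t < m, Cout (f t) = Cin (f (t + 1)) ∧ SIin (f (t + 1)) = SIout (f t))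
    (hedgeG : ∀ t < k, Cout (g t) = Cin (g (t + 1)) ∧ SIin (g (t + 1)) = SIout (g t)) :
    SIout vi * (Cout vi : ℝ) = SIout vj * (Cout vj : ℝ) := by
  have hrate : ∀ v, ((∃ t ≤ m, f t = v) ∨ (∃ t ≤ k, g t = v)) →
      R v ≠ 0 ∧ Cout v = R v * Cin v ∧ SIout v = SIin v / (R v : ℝ) := fun v hv => by
    obtain ⟨hR, -, -, -, -, hC, hSI⟩ := hnode v hv
    exact ⟨hR.ne', hC, hSI⟩
  have hf := siOut_mul_cOut_path_eq R Cin Cout SIin SIout m f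
    (fun t ht => hrate _ (.inl ⟨t + 1, ht, rfl⟩)) hedgeF
  have hg := siOut_mul_cOut_path_eq R Cin Cout SIin SIout k g
    (fun t ht => hrate _ (.inr ⟨t + 1, ht, rfl⟩)) hedgeG
  rw [← hf0, ← hg0, ← hf, ← hg, hfm, hgk]

/-- Lemma 2 of the paper.
Let `vi ≠ vj` be two tasks in a canonical task graph with no buffer nodes, and
suppose a node `v'` is reachable from `vi` via a directed path `f 0, …, f m`
and from `vj` via a directed path `g 0, …, g k`. Every node on these paths has
a positive rational production rate `R v`, positive data volumes with
`Cout v = R v * Cin v`, and positive real streaming intervals with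
`SIout v = SIin v / R v`; along each edge of the paths the output volume of
the source equals the input volume of the target and the input streaming
interval of the target equals the output streaming interval of the source
(in particular `v'` has a single well-defined input streaming interval,
delivered along both paths). Then
`SIout vi * Cout vi = SIout vj * Cout vj`. -/
theorem streaming_interval_volume_product_eq
    {α : Type*} (vi vj v' : α) (hne : vi ≠ vj)
    (m k : ℕ) (f g : ℕ → α)
    (hf0 : f 0 = vi) (hfm : f m = v')
    (hg0 : g 0 = vj) (hgk : g k = v')
    (R Cin Cout : α → ℚ) (SIin SIout : α → ℝ)
    (hnode : ∀ v : α, ((∃ t ≤ m, f t = v) ∨ (∃ t ≤ k, g t = v)) →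
      0 < R v ∧ 0 < Cin v ∧ 0 < Cout v ∧ 0 < SIin v ∧ 0 < SIout v ∧
      Cout v = R v * Cin v ∧ SIout v = SIin v / (R v : ℝ))
    (hedgeF : ∀ t < m, Cout (f t) = Cin (f (t + 1)) ∧ SIin (f (t + 1)) = SIout (f t))
    (hedgeG : ∀ t < k, Cout (g t) = Cin (g (t + 1)) ∧ SIin (g (t + 1)) = SIout (g t)) :
    SIout vi * (Cout vi : ℝ) = SIout vj * (Cout vj : ℝ) :=
  streaming_interval_volume_product_eq_general vi vj v' m k f g hf0 hfm hg0 hgk R Cin Cout SIin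
    SIout hnode hedgeF hedgeG
end

section
/- Let n, p, k ≥ 1 be natural numbers, let m = ⌈n/p⌉, and let ℓ : Fin n → ℕ be a nondecreasing sequence of positive integers (the levels of n tasks sorted in level order). Partition the indices {0, ..., n−1} into m consecutive blocks B_1, ..., B_m where block B_i consists of indices (i−1)·p through min(i·p, n) − 1 (so each block has at most p elements). For each block B_i let λ_i denote the number of distinct values of ℓ occurring in B_i, and let L = max_i ℓ_i denote the largest level, where additionally ℓ attains every value in {1, ..., L} (levels are consecutive). Then, as rational numbers, Σ_{i=1}^{m} (k + λ_i − 1) ≤ k·n/p + k + L − 1. -/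
/-!
Clamp the start of block `i` to `c i = min (i p) (n - 1)`. Block `i` lies inside
`[c i, c (i + 1)]`, so by monotonicity its levels lie in `[ℓ (c i), ℓ (c (i + 1))]` and `λ_i - 1 ≤ ℓ (c (i + 1)) - ℓ (c i)`. Summing, the drain terms
telescope to `ℓ (c m) - ℓ 0 ≤ L - 1`, while the `m = ⌈n / p⌉ ≤ n / p + 1` fill terms
contribute at most `k n / p + k`.
-/

open Finset

theorem Nat.cast_add_sub_one_div_le {α : Type*} [Semifield α] [LinearOrder α]
    [IsStrictOrderedRing α] (n p : ℕ) :
    (((n + p - 1) / p : ℕ) : α) ≤ n / p + 1 :=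
  calc (((n + p - 1) / p : ℕ) : α)
      ≤ ((n + p - 1 : ℕ) : α) / p := Nat.cast_div_le
    _ ≤ ((n + p : ℕ) : α) / p := by gcongr; omega
    _ = n / p + p / p := by rw [Nat.cast_add, add_div]
    _ ≤ n / p + 1 := by gcongr; exact div_self_le_one _

theorem card_image_add_le_of_monotoneOn {α : Type*} [Preorder α] {f : α → ℕ} {a b : α}
    {s : Finset α} (hs : ↑s ⊆ Set.Icc a b) (hf : MonotoneOn f (Set.Icc a b)) (hab : a ≤ b) :
    #(s.image f) + f a ≤ f b + 1 := by
  have hfab : f a ≤ f b := hf ⟨le_rfl, hab⟩ ⟨hab, le_rfl⟩ hab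
  have himage : s.image f ⊆ Icc (f a) (f b) := by
    intro v hv
    obtain ⟨x, hx, rfl⟩ := mem_image.mp hv
    obtain ⟨hax, hxb⟩ := hs hx
    exact mem_Icc.mpr ⟨hf ⟨le_rfl, hab⟩ (hs hx) hax, hf (hs hx) ⟨hab, le_rfl⟩ hxb⟩
  have := card_le_card himage
  rw [Nat.card_Icc] at this
  omega

theorem coe_Ico_mul_subset_Icc_min (i p n : ℕ) :
    (↑(Ico (i * p) (min ((i + 1) * p) n)) : Set ℕ) ⊆
      Set.Icc (min (i * p) (n - 1)) (min ((i + 1) * p) (n - 1)) := by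
  intro j hj
  simp only [coe_Ico, Set.mem_Ico, Set.mem_Icc] at hj ⊢
  omega

theorem card_image_block_add_le {n p : ℕ} {ℓ : ℕ → ℕ} (hn : 0 < n)
    (hmono : ∀ i j, i ≤ j → j < n → ℓ i ≤ ℓ j) (i : ℕ) :
    #((Ico (i * p) (min ((i + 1) * p) n)).image ℓ) + ℓ (min (i * p) (n - 1))
      ≤ ℓ (min ((i + 1) * p) (n - 1)) + 1 := by
  refine card_image_add_le_of_monotoneOn (coe_Ico_mul_subset_Icc_min i p n) ?_ ?_
  · intro x _ y hy hxy
    exact hmono x y hxy (by simp only [Set.mem_Icc] at hy; omega)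
  · exact min_le_min_right _ (Nat.mul_le_mul_right p (Nat.le_succ i))

theorem elementwise_schedule_time_bound_general
    (n p k : ℕ) (hn : 1 ≤ n)
    (m : ℕ) (hm : m = (n + p - 1) / p)
    (ℓ : ℕ → ℕ)
    (hpos : ∀ j < n, 1 ≤ ℓ j)
    (hmono : ∀ i j, i ≤ j → j < n → ℓ i ≤ ℓ j)
    (L : ℕ) (hL : L = (Finset.range n).sup ℓ) :
    ∑ i ∈ Finset.range m,
        ((k : ℚ) + ((Finset.Ico (i * p) (min ((i + 1) * p) n)).image ℓ).card - 1)
      ≤ (k : ℚ) * n / p + k + L - 1 := by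
  set u : ℕ → ℚ := fun i ↦ ℓ (min (i * p) (n - 1))
  have hblock (i : ℕ) :
      ((k : ℚ) + ((Ico (i * p) (min ((i + 1) * p) n)).image ℓ).card - 1)
        ≤ k + (u (i + 1) - u i) := by
    have : (#((Ico (i * p) (min ((i + 1) * p) n)).image ℓ) : ℚ) + u i ≤ u (i + 1) + 1 := by
      simp only [u]
      exact_mod_cast card_image_block_add_le (p := p) hn hmono i
    linarith
  have hu0 : 1 ≤ u 0 := by simpa [u] using hpos 0 hn
  have huL : u m ≤ L := by
    simp only [u, hL, Nat.cast_le]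
    exact le_sup (mem_range.mpr (by omega))
  have hmk : (m : ℚ) * k ≤ k * n / p + k := by
    calc (m : ℚ) * k ≤ (n / p + 1) * k :=
          mul_le_mul_of_nonneg_right (hm ▸ Nat.cast_add_sub_one_div_le n p) k.cast_nonneg
      _ = k * n / p + k := by ring
  calc _ ≤ ∑ i ∈ range m, ((k : ℚ) + (u (i + 1) - u i)) := sum_le_sum fun i _ ↦ hblock i
    _ = m * k + (u m - u 0) := by rw [sum_add_distrib, sum_range_sub]; simp
    _ ≤ k * n / p + k + L - 1 := by linarith

/-- quantitative core of the Brent-type upper bound for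
element-wise task graphs. Let `n, p, k ≥ 1`, `m = ⌈n/p⌉`, and let `ℓ` be a
nondecreasing sequence of positive integers on `{0, …, n−1}` (the levels of
`n` tasks in level order). The `i`-th block (for `0 ≤ i < m`) consists of
indices `i·p, …, min((i+1)·p, n) − 1` (at most `p` elements). Let `λ_i` be
the number of distinct values of `ℓ` in block `i`, and let `L = max ℓ`,
where `ℓ` attains every value in `{1, …, L}`. Then, in `ℚ`,
`Σ_{i} (k + λ_i − 1) ≤ k·n/p + k + L − 1`. -/
theorem elementwise_schedule_time_bound
    (n p k : ℕ) (hn : 1 ≤ n) (hp : 1 ≤ p) (hk : 1 ≤ k)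
    (m : ℕ) (hm : m = (n + p - 1) / p)
    (ℓ : ℕ → ℕ)
    (hpos : ∀ j < n, 1 ≤ ℓ j)
    (hmono : ∀ i j, i ≤ j → j < n → ℓ i ≤ ℓ j)
    (L : ℕ) (hL : L = (Finset.range n).sup ℓ)
    (hconsec : ∀ v, 1 ≤ v → v ≤ L → ∃ j < n, ℓ j = v) :
    ∑ i ∈ Finset.range m,
        ((k : ℚ) + ((Finset.Ico (i * p) (min ((i + 1) * p) n)).image ℓ).card - 1)
      ≤ (k : ℚ) * n / p + k + L - 1 :=
  elementwise_schedule_time_bound_general n p k hn m hm ℓ hpos hmono L hL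
end

section
/- Let w : Fin n → ℝ be a nonincreasing sequence of nonnegative reals (w_0 ≥ w_1 ≥ ... ≥ w_{n−1} ≥ 0) and let p ≥ 1 be a natural number with p ≤ n. Partition the indices into consecutive blocks of size p (the last block possibly smaller): block B_i (for i = 1, ..., ⌈n/p⌉) consists of indices (i−1)·p through min(i·p, n) − 1. Then the sum over all blocks except the first of the maximum of w on the block satisfies Σ_{i=2}^{⌈n/p⌉} max_{j ∈ B_i} w_j ≤ (Σ_{j=0}^{n−1} w_j) / p. -/
/-!
Block `i ≥ 1` attains its maximum at its first index `i * p`, and `w (i * p)` is at most every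
entry of the full block `i - 1`. Hence `p` times the sum of these maxima is bounded by the work of
the first `m - 1` full blocks, which nonnegativity bounds by the total work.
-/

section

variable {M : Type*} [AddCommMonoid M] [PartialOrder M] [IsOrderedAddMonoid M] {w : ℕ → M}

theorem AntitoneOn.sub_nsmul_le_sum_Ico {a b : ℕ} (hw : AntitoneOn w (Set.Icc a b)) :
    (b - a) • w b ≤ ∑ j ∈ Finset.Ico a b, w j := by
  rw [← Nat.card_Ico]
  refine Finset.card_nsmul_le_sum _ _ _ fun j hj => ?_
  obtain ⟨haj, hjb⟩ := Finset.mem_Ico.mp hj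
  exact hw ⟨haj, hjb.le⟩ ⟨haj.trans hjb.le, le_rfl⟩ hjb.le

theorem AntitoneOn.nsmul_sum_Ico_le_sum_range {p : ℕ} :
    ∀ {K : ℕ}, AntitoneOn w (Set.Iic (K * p)) →
      p • ∑ i ∈ Finset.Ico 1 (K + 1), w (i * p) ≤ ∑ j ∈ Finset.range (K * p), w j
  | 0, _ => by simp
  | K + 1, hw => by
    have hblock : p • w ((K + 1) * p) ≤ ∑ j ∈ Finset.Ico (K * p) ((K + 1) * p), w j := by
      simpa only [add_mul, one_mul, Nat.add_sub_cancel_left] using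
        (hw.mono (Set.Icc_subset_Iic_self (a := K * p))).sub_nsmul_le_sum_Ico
    have hle : K * p ≤ (K + 1) * p := by gcongr; omega
    rw [Finset.sum_Ico_succ_top (by omega), nsmul_add, Finset.range_eq_Ico,
      ← Finset.sum_Ico_consecutive _ (Nat.zero_le _) hle, ← Finset.range_eq_Ico]
    exact add_le_add (nsmul_sum_Ico_le_sum_range (hw.mono (Set.Iic_subset_Iic.mpr hle))) hblock

end

theorem AntitoneOn.csSup_image_Ico {α β : Type*} [Preorder α] [ConditionallyCompleteLattice β]
    {f : α → β} {a b : α} (hf : AntitoneOn f (Set.Ico a b)) (hab : a < b) :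
    sSup (f '' Set.Ico a b) = f a :=
  (hf.map_isLeast (isLeast_Ico hab)).csSup_eq

theorem sum_block_max_le_work_div_general
    (n p : ℕ) (hp : 1 ≤ p)
    (m : ℕ) (hm : m = (n + p - 1) / p)
    (w : ℕ → ℝ)
    (hnonneg : ∀ j < n, 0 ≤ w j)
    (hmono : ∀ i j, i ≤ j → j < n → w j ≤ w i) :
    ∑ i ∈ Finset.Ico 1 m, sSup (w '' Set.Ico (i * p) (min ((i + 1) * p) n))
      ≤ (∑ j ∈ Finset.range n, w j) / p := by
  have hp₀ : (0 : ℝ) < p := by exact_mod_cast hp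
  have hw : AntitoneOn w (Set.Iio n) := fun i _ j hj hij => hmono i j hij hj
  have hwork : 0 ≤ ∑ j ∈ Finset.range n, w j :=
    Finset.sum_nonneg fun j hj => hnonneg j (Finset.mem_range.mp hj)
  obtain _ | K := m
  · simpa using div_nonneg hwork hp₀.le
  have hKn : K * p < n := by
    have := (Nat.le_div_iff_mul_le hp).mp hm.le
    rw [add_mul] at this
    omega
  have hsup : ∀ i ∈ Finset.Ico 1 (K + 1),
      sSup (w '' Set.Ico (i * p) (min ((i + 1) * p) n)) = w (i * p) := by
    intro i hi
    have hiK : i * p ≤ K * p := by gcongr; exact Nat.lt_succ_iff.mp (Finset.mem_Ico.mp hi).2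
    exact (hw.mono fun j hj => hj.2.trans_le (min_le_right _ _)).csSup_image_Ico
      (lt_min (by rw [add_mul]; omega) (by omega))
  rw [Finset.sum_congr rfl hsup, le_div_iff₀ hp₀, mul_comm, ← nsmul_eq_mul]
  calc p • ∑ i ∈ Finset.Ico 1 (K + 1), w (i * p)
      ≤ ∑ j ∈ Finset.range (K * p), w j :=
        (hw.mono fun j hj => Set.mem_Iio.mpr (hj.trans_lt hKn)).nsmul_sum_Ico_le_sum_range
    _ ≤ ∑ j ∈ Finset.range n, w j :=
        Finset.sum_le_sum_of_subset_of_nonneg (Finset.range_subset_range.mpr hKn.le)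
          fun j hj _ => hnonneg j (Finset.mem_range.mp hj)

/-- work lower-bound lemma for downsampler graphs.
Let `w 0 ≥ w 1 ≥ ⋯ ≥ w (n−1) ≥ 0` be a nonincreasing sequence of
nonnegative reals and let `1 ≤ p ≤ n`. Partition the indices into
consecutive blocks of size `p` (the last possibly smaller): block `i`
(`0 ≤ i < m`, `m = ⌈n/p⌉`) consists of indices `i·p, …, min((i+1)·p, n) − 1`.
Then the sum over all blocks except the first of the maximum of `w` on the
block (expressed as `sSup` of the image, a finite nonempty set of reals)
is at most `(Σ_j w j) / p`. -/
theorem sum_block_max_le_work_div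
    (n p : ℕ) (hp : 1 ≤ p) (hpn : p ≤ n)
    (m : ℕ) (hm : m = (n + p - 1) / p)
    (w : ℕ → ℝ)
    (hnonneg : ∀ j < n, 0 ≤ w j)
    (hmono : ∀ i j, i ≤ j → j < n → w j ≤ w i) :
    ∑ i ∈ Finset.Ico 1 m, sSup (w '' Set.Ico (i * p) (min ((i + 1) * p) n))
      ≤ (∑ j ∈ Finset.range n, w j) / p :=
  sum_block_max_le_work_div_general n p hp m hm w hnonneg hmono
end
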